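/- arXiv:1901.08240 — 2 statements merged into one kernel-verified Lean document; each statement's English description precedes it below -/
import Mathlib

section
/- Let S_{m,t} be the graph obtained from the star S_m with m edges by adding t edges between 2t distinct leaves (forming t edge-disjoint triangles, 2t ≤ m). Then scfc(S_{m,t}) = m + t − 2t = (m+t) − 2t, i.e., equals the number of edges of S_{m,t} minus twice the number of triangles. -/
open SimpleGraph

/-- An edge-coloring `c` makes `G` strongly conflict-free connected if every pair of
distinct vertices is joined by a shortest path on which some color appears exactly once. -/
def IsStrongCFCColoring {V : Type*} (G : SimpleGraph V) (c : Sym2 V → ℕ) : Prop :=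
  ∀ u v : V, u ≠ v → ∃ p : G.Walk u v, p.IsPath ∧ p.length = G.dist u v ∧
    ∃ a : ℕ, (p.edges.map c).count a = 1

/-- The strong conflict-free connection number: the least number of colors needed. -/
noncomputable def scfc {V : Type*} (G : SimpleGraph V) : ℕ :=
  sInf {k | ∃ c : Sym2 V → ℕ, (∀ e ∈ G.edgeSet, c e < k) ∧ IsStrongCFCColoring G c}

/-- `S_{m,t}`: the star with center `0` and leaves `1, …, m`, together with the extra
edges joining leaf `2i+1` to leaf `2i+2` for `i < t`, forming `t` edge-disjoint triangles. -/
def starPlusTriangles (m t : ℕ) : SimpleGraph (Fin (m + 1)) :=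
  SimpleGraph.fromRel (fun u v =>
    u = 0 ∨ ∃ i : ℕ, i < t ∧ (u : ℕ) = 2 * i + 1 ∧ (v : ℕ) = 2 * i + 2)

/-!
Split the leaves into `m - t` classes: the two leaves of a triangle form one class, each pendant
leaf a class of its own. Two leaves are adjacent exactly when they are distinct and in the same
class. For leaves in different classes the only shortest path runs through the center, so the two
star edges need different colors, which forces `m - t` colors. Conversely, coloring every star
edge by the class of its leaf makes each of these paths conflict-free.
-/

lemma List.exists_count_pair_eq_one_iff {α : Type*} [BEq α] [LawfulBEq α] {x y : α} :
    (∃ a, [x, y].count a = 1) ↔ x ≠ y := by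
  constructor
  · rintro ⟨a, ha⟩ rfl
    by_cases hax : x = a <;> simp [hax] at ha
  · intro hxy
    exact ⟨x, by simp [hxy.symm]⟩

namespace SimpleGraph

variable {V : Type*} {G : SimpleGraph V}

lemma dist_eq_two_of_adj_of_adj {u v w : V} (huv : u ≠ v) (hnadj : ¬ G.Adj u v)
    (huw : G.Adj u w) (hwv : G.Adj w v) : G.dist u v = 2 := by
  have h : G.edist u v = 2 := edist_eq_two_iff.mpr ⟨huv, hnadj, w, huw, hwv.symm⟩
  simp [dist, h]

end SimpleGraph

section StrongCFC

variable {V : Type*} {G : SimpleGraph V} {c : Sym2 V → ℕ}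

/-- The only shortest `u`–`v` path is `u w v`, and a two-edge path is conflict-free exactly when
its two colors differ. -/
lemma IsStrongCFCColoring.ne_of_unique_commonNeighbor (hc : IsStrongCFCColoring G c)
    {u v w : V} (huv : u ≠ v) (hnadj : ¬ G.Adj u v) (huw : G.Adj u w) (hwv : G.Adj w v)
    (huniq : ∀ x, G.Adj u x → G.Adj x v → x = w) : c s(u, w) ≠ c s(w, v) := by
  obtain ⟨p, -, hlen, hcf⟩ := hc u v huv
  rw [dist_eq_two_of_adj_of_adj huv hnadj huw hwv] at hlen
  match p, hlen with
  | .cons hux (.cons hxv .nil), _ =>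
    obtain rfl := huniq _ hux hxv
    simpa using List.exists_count_pair_eq_one_iff.mp hcf

lemma isStrongCFCColoring_of_forall_not_adj
    (h : ∀ u v, u ≠ v → ¬ G.Adj u v → ∃ w, G.Adj u w ∧ G.Adj w v ∧ c s(u, w) ≠ c s(w, v)) :
    IsStrongCFCColoring G c := by
  intro u v huv
  by_cases hadj : G.Adj u v
  · exact ⟨hadj.toWalk, by simp [huv], by simp [dist_eq_one_iff_adj.mpr hadj], c s(u, v),
      by simp⟩
  · obtain ⟨w, huw, hwv, hne⟩ := h u v huv hadj
    refine ⟨.cons huw hwv.toWalk, ?_, by simp [dist_eq_two_of_adj_of_adj huv hadj huw hwv],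
      List.exists_count_pair_eq_one_iff.mpr (by simpa using hne)⟩
    simp [huv, huw.ne, hwv.ne]

end StrongCFC

/-- Classes are numbered `0, …, m-t-1`, the `t` triangles first. -/
def leafClass (t j : ℕ) : ℕ := if j ≤ 2 * t then (j - 1) / 2 else j - t - 1

def classLeaf (t i : ℕ) : ℕ := if i < t then 2 * i + 1 else i + t + 1

lemma leafClass_classLeaf (t i : ℕ) : leafClass t (classLeaf t i) = i := by
  unfold leafClass classLeaf
  split_ifs <;> omega

lemma classLeaf_pos (t i : ℕ) : 0 < classLeaf t i := by
  unfold classLeaf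
  split_ifs <;> omega

lemma classLeaf_le {m t i : ℕ} (hi : i < m - t) : classLeaf t i ≤ m := by
  unfold classLeaf
  split_ifs <;> omega

lemma leafClass_lt {m t j : ℕ} (ht : 2 * t ≤ m) (hj₀ : 0 < j) (hj : j ≤ m) :
    leafClass t j < m - t := by
  unfold leafClass
  split_ifs <;> omega

namespace starPlusTriangles

variable {m t : ℕ}

lemma adj_zero {u : Fin (m + 1)} (hu : u ≠ 0) : (starPlusTriangles m t).Adj u 0 := by
  simp [starPlusTriangles, hu]

lemma adj_iff_leafClass {u v : Fin (m + 1)} (hu : u ≠ 0) (hv : v ≠ 0) :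
    (starPlusTriangles m t).Adj u v ↔ u ≠ v ∧ leafClass t u = leafClass t v := by
  have hu' : (u : ℕ) ≠ 0 := Fin.val_ne_zero_iff.mpr hu
  have hv' : (v : ℕ) ≠ 0 := Fin.val_ne_zero_iff.mpr hv
  simp only [starPlusTriangles, fromRel_adj, hu, hv, false_or, leafClass, and_congr_right_iff]
  intro huv
  rw [Fin.ne_iff_vne] at huv
  constructor
  · rintro (⟨i, hi, hui, hvi⟩ | ⟨i, hi, hvi, hui⟩) <;> split_ifs <;> omega
  · intro hcl
    refine (lt_or_gt_of_ne huv).imp (fun _ => ⟨(u - 1) / 2, ?_⟩) (fun _ => ⟨(v - 1) / 2, ?_⟩) <;>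
      split_ifs at hcl <;> omega

lemma eq_zero_of_adj_of_adj {u v x : Fin (m + 1)} (hu : u ≠ 0) (hv : v ≠ 0) (huv : u ≠ v)
    (hnadj : ¬ (starPlusTriangles m t).Adj u v) (hux : (starPlusTriangles m t).Adj u x)
    (hxv : (starPlusTriangles m t).Adj x v) : x = 0 := by
  by_contra hx
  rw [adj_iff_leafClass hu hx] at hux
  rw [adj_iff_leafClass hx hv] at hxv
  exact hnadj ((adj_iff_leafClass hu hv).mpr ⟨huv, hux.2.trans hxv.2⟩)

lemma apply_ne_of_leafClass_ne {c : Sym2 (Fin (m + 1)) → ℕ}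
    (hc : IsStrongCFCColoring (starPlusTriangles m t) c) {u v : Fin (m + 1)} (hu : u ≠ 0)
    (hv : v ≠ 0) (hcl : leafClass t u ≠ leafClass t v) : c s(u, 0) ≠ c s(v, 0) := by
  have hnadj : ¬ (starPlusTriangles m t).Adj u v := fun h =>
    hcl ((adj_iff_leafClass hu hv).mp h).2
  have huv : u ≠ v := fun h => hcl (by rw [h])
  rw [Sym2.eq_swap (a := v)]
  exact hc.ne_of_unique_commonNeighbor huv hnadj (adj_zero hu) (adj_zero hv).symm
    fun _ hux hxv => eq_zero_of_adj_of_adj hu hv huv hnadj hux hxv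

lemma sub_le_of_isStrongCFCColoring {k : ℕ} {c : Sym2 (Fin (m + 1)) → ℕ}
    (hk : ∀ e ∈ (starPlusTriangles m t).edgeSet, c e < k)
    (hc : IsStrongCFCColoring (starPlusTriangles m t) c) : m - t ≤ k := by
  let leaf (i : ℕ) : Fin (m + 1) := Fin.ofNat (m + 1) (classLeaf t i)
  have hleaf (i : ℕ) (hi : i < m - t) : (leaf i : ℕ) = classLeaf t i :=
    Nat.mod_eq_of_lt (Nat.lt_succ_of_le (classLeaf_le hi))
  have hleaf_ne (i : ℕ) (hi : i < m - t) : leaf i ≠ 0 :=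
    Fin.val_ne_zero_iff.mp ((hleaf i hi).trans_ne (classLeaf_pos t i).ne')
  have hinj : Set.InjOn (fun i => c s(leaf i, 0)) (Finset.range (m - t)) := by
    intro i hi j hj hcij
    simp only [Finset.coe_range, Set.mem_Iio] at hi hj
    by_contra hij
    refine apply_ne_of_leafClass_ne hc (hleaf_ne i hi) (hleaf_ne j hj) ?_ hcij
    rwa [hleaf i hi, hleaf j hj, leafClass_classLeaf, leafClass_classLeaf]
  simpa using Finset.card_le_card_of_injOn (t := Finset.range k) _
    (fun i hi => Finset.mem_range.mpr (hk _ (adj_zero (hleaf_ne i (Finset.mem_range.mp hi)))))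
    hinj

/-- A star edge gets the class of its leaf, a triangle edge the class of its triangle. -/
def coloring(t : ℕ) (e : Sym2 (Fin (m + 1))) : ℕ := leafClass t e.sup

lemma coloring_lt (ht : 2 * t ≤ m) {e : Sym2 (Fin (m + 1))}
    (he : e ∈ (starPlusTriangles m t).edgeSet) : coloring t e < m - t := by
  induction e using Sym2.ind with
  | _ a b =>
    have hab : (a : ℕ) ≠ b := Fin.val_ne_iff.mpr ((starPlusTriangles m t).ne_of_adj he)
    have hsup : ((a ⊔ b : Fin (m + 1)) : ℕ) = max (a : ℕ) b := Fin.coe_max a b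
    rw [coloring, Sym2.sup_mk]
    exact leafClass_lt ht (by omega) (by omega)

lemma isStrongCFCColoring_coloring :
    IsStrongCFCColoring (starPlusTriangles m t) (coloring t) := by
  refine isStrongCFCColoring_of_forall_not_adj fun u v huv hnadj => ?_
  have hu : u ≠ 0 := by
    rintro rfl
    exact hnadj (adj_zero huv.symm).symm
  have hv : v ≠ 0 := by
    rintro rfl
    exact hnadj (adj_zero huv)
  refine ⟨0, adj_zero hu, (adj_zero hv).symm, ?_⟩
  simpa [coloring] using fun h => hnadj ((adj_iff_leafClass hu hv).mpr ⟨huv, h⟩)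

end starPlusTriangles

theorem scfc_starPlusTriangles_general (m t : ℕ) (ht : 2 * t ≤ m) :
    scfc (starPlusTriangles m t) = (m + t) - 2 * t := by
  rw [show m + t - 2 * t = m - t by omega]
  exact IsLeast.csInf_eq
    ⟨⟨starPlusTriangles.coloring t, fun _ he => starPlusTriangles.coloring_lt ht he,
      starPlusTriangles.isStrongCFCColoring_coloring⟩,
    fun _ ⟨_, hk, hc⟩ => starPlusTriangles.sub_le_of_isStrongCFCColoring hk hc⟩

theorem scfc_starPlusTriangles (m t : ℕ) (hm : 1 ≤ m) (ht : 2 * t ≤ m) :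
    scfc (starPlusTriangles m t) = (m + t) - 2 * t :=
  scfc_starPlusTriangles_general m t ht
end

section
/- Let G be a connected graph of size m with scfc(G) = m − k. Then diam(G) − ⌈log₂(diam(G)+1)⌉ ≤ k. -/
/-!
Let `P = e₁ ⋯ e_d` be a shortest path realising the diameter `d`. Color `eᵢ` by the 2-adic
valuation `ν₂(i)`, which takes only the `⌈log₂(d + 1)⌉` values `0, …, ⌊log₂ d⌋`, and give every
edge off `P` a fresh color of its own. Among consecutive integers exactly one has maximal
2-adic valuation, so every subpath of `P`, itself a shortest path, is conflict-free. A pair of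
vertices not both on `P` is joined by a shortest path starting at a vertex off `P`; its first edge
is off `P` and hence carries a unique color. Thus `scfc G ≤ ⌈log₂(d + 1)⌉ + (m - d)`.
-/

open SimpleGraph

namespace List

theorem count_map_eq_one_of_nodup {α β : Type*} [DecidableEq β] {l : List α}
    (f : α → β) (hl : l.Nodup) {x : α} (hx : x ∈ l) (h : ∀ y ∈ l, f y = f x → y = x) :
    (l.map f).count (f x) = 1 := by
  classical
  rw [count_eq_countP, countP_map, ← count_eq_one_of_mem hl hx, count_eq_countP]
  refine countP_congr fun y hy => ?_
  simpa using ⟨h y hy, congrArg f⟩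

theorem map_idxOf_of_nodup {α : Type*} [DecidableEq α] {l : List α} (hl : l.Nodup) :
    l.map l.idxOf = range l.length :=
  ext_getElem (by simp) fun i _ _ => by simp [hl.idxOf_getElem]

theorem IsInfix.exists_eq_range' {l : List ℕ} {s n : ℕ} (h : l <:+: range' s n) :
    ∃ t L, s ≤ t ∧ l = range' t L := by
  obtain ⟨l₁, l₂, h⟩ := h
  obtain ⟨k, -, hk, -⟩ := range'_eq_append_iff.mp h.symm
  obtain ⟨j, -, -, rfl⟩ := range'_eq_append_iff.mp hk.symm
  exact ⟨s + j * 1, k - j, by omega, rfl⟩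

end List

theorem padicValNat_lt_clog_succ {p i n : ℕ} [Fact p.Prime] (hi : i ≤ n) (hn : n ≠ 0) :
    padicValNat p i < Nat.clog p (n + 1) :=
  calc padicValNat p i ≤ Nat.log p i := padicValNat_le_nat_log i
    _ ≤ Nat.log p n := Nat.log_mono_right hi
    _ < Nat.clog p (n + 1) := by
      rw [Nat.lt_clog_iff_pow_lt (Fact.out : p.Prime).one_lt]
      exact Nat.lt_succ_of_le (Nat.pow_log_le_self p hn)

/-- Writing `z = 2 ^ T * u` with `u` odd, the witness is `z + 2 ^ T = 2 ^ T * (u + 1)`. -/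
theorem exists_lt_padicValNat_two_of_eq {z w : ℕ} (hz : z ≠ 0) (hzw : z < w)
    (h : padicValNat 2 z = padicValNat 2 w) :
    ∃ y, z < y ∧ y ≤ w ∧ padicValNat 2 z < padicValNat 2 y := by
  set T := padicValNat 2 z with hT
  obtain ⟨u, hu⟩ : 2 ^ T ∣ z := pow_padicValNat_dvd
  have hu0 : u ≠ 0 := by rintro rfl; simp_all
  have hu_odd : ¬ 2 ∣ u := by
    rw [hu, padicValNat.mul (by positivity) hu0, padicValNat.prime_pow] at hT
    exact fun h2 => (one_le_padicValNat_of_dvd hu0 h2).not_gt (by omega)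
  refine ⟨z + 2 ^ T, Nat.lt_add_of_pos_right (by positivity), ?_, ?_⟩
  · have : 2 ^ T ∣ w - z := Nat.dvd_sub (h ▸ pow_padicValNat_dvd) ⟨u, hu⟩
    have := Nat.le_of_dvd (by omega) this
    omega
  · have h2 : 2 ∣ u + 1 := by omega
    rw [hu, ← mul_add_one, padicValNat.mul (by positivity) (by omega), padicValNat.prime_pow]
    have := one_le_padicValNat_of_dvd (by omega) h2
    omega

theorem exists_unique_padicValNat_two_mem_Ico {a b : ℕ} (ha : a ≠ 0) (hab : a < b) :
    ∃ x ∈ Finset.Ico a b, ∀ y ∈ Finset.Ico a b, padicValNat 2 y = padicValNat 2 x → y = x := by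
  obtain ⟨x, hx, hmax⟩ :=
    (Finset.Ico a b).exists_max_image (padicValNat 2) (Finset.nonempty_Ico.2 hab)
  have no_tie : ∀ z ∈ Finset.Ico a b, ∀ w ∈ Finset.Ico a b, z < w →
      padicValNat 2 z = padicValNat 2 x → padicValNat 2 w ≠ padicValNat 2 x := by
    intro z hz w hw hzw hzx hwx
    simp only [Finset.mem_Ico] at hz hw
    obtain ⟨y, hzy, hyw, hlt⟩ :=
      exists_lt_padicValNat_two_of_eq (by omega) hzw (hzx.trans hwx.symm)
    exact (hmax y (Finset.mem_Ico.2 ⟨by omega, by omega⟩)).not_gt (hzx ▸ hlt)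
  refine ⟨x, hx, fun y hy hyx => ?_⟩
  rcases lt_trichotomy y x with hyx' | rfl | hxy
  · exact absurd rfl (no_tie y hy x hx hyx' hyx)
  · rfl
  · exact absurd hyx (no_tie x hx y hy hxy rfl)

def List.InfixConflictFree {β : Type*} [DecidableEq β] (l : List β) : Prop :=
  ∀ l', l' <:+: l → l' ≠ [] → ∃ a, l'.count a = 1

theorem List.infixConflictFree_map_padicValNat_two_range' {s : ℕ} (hs : s ≠ 0) (n : ℕ) :
    ((range' s n).map (padicValNat 2)).InfixConflictFree := by
  intro l hl hne
  obtain ⟨l', hl', rfl⟩ := infix_map_iff.mp hl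
  obtain ⟨t, L, hst, rfl⟩ := hl'.exists_eq_range'
  obtain ⟨x, hx, hxu⟩ := exists_unique_padicValNat_two_mem_Ico (a := t) (b := t + L)
    (by omega) (by simpa [Nat.pos_iff_ne_zero] using hne)
  refine ⟨padicValNat 2 x, count_map_eq_one_of_nodup _ nodup_range' ?_ fun y hy => ?_⟩
  · simpa using hx
  · exact hxu y (by simpa using hy)

namespace SimpleGraph

variable {V : Type*} {G : SimpleGraph V}

def HasConflictFreeGeodesic (G : SimpleGraph V) (c : Sym2 V → ℕ) (u v : V) : Prop :=
  ∃ p : G.Walk u v, p.IsPath ∧ p.length = G.dist u v ∧ ∃ a : ℕ, (p.edges.map c).count a = 1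

theorem HasConflictFreeGeodesic.symm {c : Sym2 V → ℕ} {u v : V}
    (h : G.HasConflictFreeGeodesic c u v) : G.HasConflictFreeGeodesic c v u := by
  obtain ⟨p, hp, hpd, a, ha⟩ := h
  refine ⟨p.reverse, hp.reverse, by rw [Walk.length_reverse, hpd, dist_comm], a, ?_⟩
  rwa [Walk.edges_reverse, List.map_reverse, List.count_reverse]

theorem Walk.exists_append_append_of_mem_support {x y u v : V} (p : G.Walk x y)
    (hu : u ∈ p.support) (hv : v ∈ p.support) :
    (∃ (w₁ : G.Walk x u) (q : G.Walk u v) (w₂ : G.Walk v y), p = (w₁.append q).append w₂) ∨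
      ∃ (w₁ : G.Walk x v) (q : G.Walk v u) (w₂ : G.Walk u y), p = (w₁.append q).append w₂ := by
  classical
  have hp := p.take_spec hu
  rw [← hp, Walk.mem_support_append_iff] at hv
  rcases hv with hv | hv
  · right
    refine ⟨(p.takeUntil u hu).takeUntil v hv, (p.takeUntil u hu).dropUntil v hv,
      p.dropUntil u hu, ?_⟩
    rw [(p.takeUntil u hu).take_spec hv, hp]
  · left
    refine ⟨p.takeUntil u hu, (p.dropUntil u hu).takeUntil v hv,
      (p.dropUntil u hu).dropUntil v hv, ?_⟩
    rw [← Walk.append_assoc, (p.dropUntil u hu).take_spec hv, hp]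

theorem Walk.length_eq_dist_of_append_append {x y u v : V} {w₁ : G.Walk x u} {q : G.Walk u v}
    {w₂ : G.Walk v y} (h : ((w₁.append q).append w₂).length = G.dist x y) :
    q.length = G.dist u v := by
  have h₁ := dist_le w₁
  have h₂ := dist_le q
  have h₃ := dist_le w₂
  have t₁ := w₂.reachable.dist_triangle_right x
  have t₂ := q.reachable.dist_triangle_right x
  simp only [Walk.length_append] at h
  omega

theorem hasConflictFreeGeodesic_of_append_append {c : Sym2 V → ℕ} {x y u v : V}
    {w₁ : G.Walk x u} {q : G.Walk u v} {w₂ : G.Walk v y} (huv : u ≠ v)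
    (hp : ((w₁.append q).append w₂).IsPath)
    (hpd : ((w₁.append q).append w₂).length = G.dist x y)
    (hcol : (((w₁.append q).append w₂).edges.map c).InfixConflictFree) :
    G.HasConflictFreeGeodesic c u v := by
  refine ⟨q, hp.of_append_left.of_append_right, Walk.length_eq_dist_of_append_append hpd, ?_⟩
  refine hcol _ ?_ (by simpa using q.not_nil_of_ne huv)
  simp only [Walk.edges_append, List.map_append]
  exact ⟨_, _, rfl⟩

theorem hasConflictFreeGeodesic_of_mem_support {c : Sym2 V → ℕ} {x y u v : V}
    {p : G.Walk x y} (hp : p.IsPath) (hpd : p.length = G.dist x y)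
    (hcol : (p.edges.map c).InfixConflictFree)
    (hu : u ∈ p.support) (hv : v ∈ p.support) (huv : u ≠ v) :
    G.HasConflictFreeGeodesic c u v := by
  rcases p.exists_append_append_of_mem_support hu hv with ⟨_, _, _, rfl⟩ | ⟨_, _, _, rfl⟩
  · exact hasConflictFreeGeodesic_of_append_append huv hp hpd hcol
  · exact (hasConflictFreeGeodesic_of_append_append huv.symm hp hpd hcol).symm

theorem hasConflictFreeGeodesic_of_notMem_support {c : Sym2 V → ℕ} {x y u v : V}
    (hc : G.Connected) {p : G.Walk x y} (hu : u ∉ p.support) (huv : u ≠ v)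
    (hfresh : ∀ e ∈ G.edgeSet, e ∉ p.edges → ∀ e' ∈ G.edgeSet, c e' = c e → e' = e) :
    G.HasConflictFreeGeodesic c u v := by
  obtain ⟨q, hq, hqd⟩ := hc.exists_path_of_dist u v
  have hfirst := q.mk_start_snd_mem_edges (q.not_nil_of_ne huv)
  have hoff : s(u, q.snd) ∉ p.edges := fun h => hu (p.fst_mem_support_of_mem_edges h)
  refine ⟨q, hq, hqd, _, List.count_map_eq_one_of_nodup c hq.isTrail.edges_nodup hfirst ?_⟩
  exact fun e he => hfresh _ (q.edges_subset_edgeSet hfirst) hoff e (q.edges_subset_edgeSet he)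

theorem isStrongCFCColoring_of_ruler {c : Sym2 V → ℕ} {x y : V}
    (hc : G.Connected) {p : G.Walk x y} (hp : p.IsPath) (hpd : p.length = G.dist x y)
    (hruler : p.edges.map c = (List.range' 1 p.length).map (padicValNat 2))
    (hfresh : ∀ e ∈ G.edgeSet, e ∉ p.edges → ∀ e' ∈ G.edgeSet, c e' = c e → e' = e) :
    IsStrongCFCColoring G c := by
  have hcol : (p.edges.map c).InfixConflictFree :=
    hruler ▸ List.infixConflictFree_map_padicValNat_two_range' one_ne_zero _
  intro u v huv
  by_cases hu : u ∈ p.support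
  · by_cases hv : v ∈ p.support
    · exact hasConflictFreeGeodesic_of_mem_support hp hpd hcol hu hv huv
    · exact (hasConflictFreeGeodesic_of_notMem_support hc hv huv.symm hfresh).symm
  · exact hasConflictFreeGeodesic_of_notMem_support hc hu huv hfresh

theorem scfc_le_clog_add_card_sub [Fintype G.edgeSet] {x y : V}
    (hc : G.Connected) {p : G.Walk x y} (hp : p.IsPath) (hpd : p.length = G.dist x y) :
    scfc G ≤ Nat.clog 2 (p.length + 1) + (G.edgeFinset.card - p.length) := by
  classical
  set r := Nat.clog 2 (p.length + 1)
  set off := (G.edgeFinset \ p.edges.toFinset).toList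
  let c : Sym2 V → ℕ := fun e =>
    if e ∈ p.edges then padicValNat 2 (p.edges.idxOf e + 1) else r + off.idxOf e
  have hc_on : ∀ e ∈ p.edges, c e < r := by
    intro e he
    have := List.idxOf_lt_length_of_mem he
    rw [Walk.length_edges] at this
    simp only [c, he, if_true]
    exact padicValNat_lt_clog_succ (by omega) (by omega)
  have hc_off : ∀ e ∈ G.edgeSet, e ∉ p.edges → e ∈ off ∧ c e = r + off.idxOf e := by
    intro e he he'
    simp [off, c, he, he']
  have hoff_length : off.length = G.edgeFinset.card - p.length := by
    have hsub : p.edges.toFinset ⊆ G.edgeFinset := fun e he => by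
      simpa using p.edges_subset_edgeSet (List.mem_toFinset.mp he)
    rw [Finset.length_toList, Finset.card_sdiff_of_subset hsub,
      List.toFinset_card_of_nodup hp.isTrail.edges_nodup, Walk.length_edges]
  refine Nat.sInf_le ⟨c, fun e he => ?_, isStrongCFCColoring_of_ruler hc hp hpd ?_ ?_⟩
  · by_cases he' : e ∈ p.edges
    · exact (hc_on e he').trans_le (Nat.le_add_right _ _)
    · obtain ⟨hmem, hce⟩ := hc_off e he he'
      have := List.idxOf_lt_length_of_mem hmem
      omega
  · calc p.edges.map c = (p.edges.map p.edges.idxOf).map (padicValNat 2 ∘ (1 + ·)) := by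
          rw [List.map_map]
          refine List.map_congr_left fun e he => ?_
          simp [c, he, add_comm]
      _ = (List.range' 1 p.length).map (padicValNat 2) := by
          rw [List.map_idxOf_of_nodup hp.isTrail.edges_nodup, Walk.length_edges,
            List.range_eq_range', ← List.map_map, List.map_add_range']
  · intro e he he' e' he₁ hce
    obtain ⟨hmem, hce'⟩ := hc_off e he he'
    by_cases he₁' : e' ∈ p.edges
    · have := hc_on e' he₁'
      omega
    · obtain ⟨hmem₁, hce₁⟩ := hc_off e' he₁ he₁'
      exact (List.idxOf_inj hmem₁).mp (by omega)

end SimpleGraph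

theorem diam_sub_clog_le_general {V : Type*} [Fintype V] [DecidableEq V]
    (G : SimpleGraph V) [DecidableRel G.Adj] (hc : G.Connected) (k : ℕ)
    (hscfc : scfc G = G.edgeFinset.card - k) :
    G.diam - Nat.clog 2 (G.diam + 1) ≤ k := by
  have := hc.nonempty
  obtain ⟨x, y, hxy⟩ := G.exists_dist_eq_diam
  obtain ⟨p, hp, hpd⟩ := hc.exists_path_of_dist x y
  have hbound := scfc_le_clog_add_card_sub hc hp hpd
  have hcard := hp.isTrail.length_le_card_edgeFinset
  rw [hpd, hxy] at hbound hcard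
  omega

theorem diam_sub_clog_le {V : Type*} [Fintype V] [DecidableEq V]
    (G : SimpleGraph V) [DecidableRel G.Adj] (hc : G.Connected) (k : ℕ)
    (hk : k ≤ G.edgeFinset.card) (hscfc : scfc G = G.edgeFinset.card - k) :
    G.diam - Nat.clog 2 (G.diam + 1) ≤ k :=
  diam_sub_clog_le_general G hc k hscfc
end
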